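/- In a t-diagram with d ≥ 1, there exist at least two white points each of which lies inside two consecutive boundary triangles (i.e., corresponds to two adjacent black vertices); for d = 0 there is exactly one such white point. -/

import Mathlib

/-!
Let `w(i)` be the white point in the boundary triangle of `A_i`. In barycentric coordinates with
respect to `A_{i-1}, A_i, A_{i+1}`, every other black vertex has a negative `A_i`-coordinate, so the
boundary triangles of two non-adjacent black vertices are disjoint and `w(i) = w(j)` forces `i, j`
to be neighbours on the cycle. Hence `w` is injective on the indices with `w(i) ≠ w(i+1)`; there
are at most `d + 1` of them, so at least two indices satisfy `w(i) = w(i+1)`. With at least four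
black points no white point lies in three consecutive boundary triangles, so `w` is injective on
those indices too, and their images are two distinct white points adjacent to sides. For `d = 0`
the single white point lies in every boundary triangle.
-/

/-- A t-diagram with parameter `d`: `d+3` black points in convex position in the plane
(in the cyclic order given by the indices), `d+1` white points inside their convex hull,
all points in general position, and every triangle with black vertices containing
exactly one white point in its interior. -/
structure TDiagram (d : ℕ) where
  black : Fin (d + 3) → ℝ × ℝ
  white : Fin (d + 1) → ℝ × ℝ
  inj : Function.Injective (Sum.elim black white : Fin (d + 3) ⊕ Fin (d + 1) → ℝ × ℝ)
  genPos : ∀ x y z : Fin (d + 3) ⊕ Fin (d + 1), x ≠ y → x ≠ z → y ≠ z →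
    ¬ Collinear ℝ {Sum.elim black white x, Sum.elim black white y, Sum.elim black white z}
  edgeOrder : ∀ i : Fin (d + 3), ∃ f : (ℝ × ℝ) →ₗ[ℝ] ℝ, ∃ c : ℝ,
    f (black i) = c ∧ f (black (i + 1)) = c ∧
    ∀ j : Fin (d + 3), j ≠ i → j ≠ i + 1 → f (black j) < c
  whiteInside : ∀ w : Fin (d + 1), white w ∈ convexHull ℝ (Set.range black)
  onePerTriangle : ∀ i j k : Fin (d + 3), i ≠ j → i ≠ k → j ≠ k →
    ∃! w : Fin (d + 1), white w ∈ interior (convexHull ℝ {black i, black j, black k})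

/-- The (open) boundary triangle `A_{i-1} A_i A_{i+1}` of the black vertex `A_i`. -/
def TDiagram.bTri {d : ℕ} (X : TDiagram d) (i : Fin (d + 3)) : Set (ℝ × ℝ) :=
  interior (convexHull ℝ {X.black (i - 1), X.black i, X.black (i + 1)})

namespace Fin

open Fin.CommRing

variable {n : ℕ} [NeZero n]

theorem natCast_ne_zero_of_lt {k : ℕ} (hk0 : 0 < k) (hkn : k < n) : (k : Fin n) ≠ 0 := by
  rw [Ne, natCast_eq_zero]
  exact fun h => (Nat.le_of_dvd hk0 h).not_gt hkn

variable (i : Fin n)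

theorem sub_one_ne_self (hn : 2 ≤ n) : i - 1 ≠ i := fun h =>
  natCast_ne_zero_of_lt (n := n) (k := 1) Nat.one_pos (by omega)
    (by push_cast; linear_combination -h)

theorem self_ne_add_one (hn : 2 ≤ n) : i ≠ i + 1 := fun h =>
  natCast_ne_zero_of_lt (n := n) (k := 1) Nat.one_pos (by omega)
    (by push_cast; linear_combination -h)

theorem sub_one_ne_add_one (hn : 3 ≤ n) : i - 1 ≠ i + 1 := fun h =>
  natCast_ne_zero_of_lt (n := n) (k := 2) two_pos (by omega)
    (by push_cast; linear_combination -h)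

theorem self_ne_add_one_add_one (hn : 3 ≤ n) : i ≠ i + 1 + 1 := fun h =>
  natCast_ne_zero_of_lt (n := n) (k := 2) two_pos (by omega)
    (by push_cast; linear_combination -h)

theorem add_one_add_one_ne_sub_one (hn : 4 ≤ n) : i + 1 + 1 ≠ i - 1 := fun h =>
  natCast_ne_zero_of_lt (n := n) (k := 3) three_pos (by omega)
    (by push_cast; linear_combination h)

end Fin

section CyclicFibres

variable {n : ℕ} [NeZero n] {β : Type*} {F : Fin n → β}

theorem injOn_setOf_ne_apply_add_one
    (hF : ∀ i j, F i = F j → j = i - 1 ∨ j = i ∨ j = i + 1) :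
    Set.InjOn F {i | F i ≠ F (i + 1)} := by
  intro i hi j hj hij
  rcases hF i j hij with rfl | rfl | rfl
  · exact absurd (by rw [sub_add_cancel]; exact hij.symm) hj
  · rfl
  · exact absurd hij hi

theorem injOn_setOf_eq_apply_add_one (hn : 4 ≤ n)
    (hF : ∀ i j, F i = F j → j = i - 1 ∨ j = i ∨ j = i + 1) :
    Set.InjOn F {i | F i = F (i + 1)} := by
  have no_triple : ∀ i, F i = F (i + 1) → F (i + 1) ≠ F (i + 1 + 1) := by
    intro i h₁ h₂
    rcases hF i (i + 1 + 1) (h₁.trans h₂) with h | h | h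
    · exact Fin.add_one_add_one_ne_sub_one i hn h
    · exact Fin.self_ne_add_one_add_one i (by omega) h.symm
    · exact Fin.self_ne_add_one (i + 1) (by omega) h.symm
  intro i hi j hj hij
  rcases hF i j hij with rfl | rfl | rfl
  · have := no_triple (i - 1) hj
    rw [sub_add_cancel] at this
    exact absurd hi this
  · rfl
  · exact absurd hj (no_triple i hi)

theorem le_ncard_setOf_eq_apply_add_one [Finite β]
    (hF : ∀ i j, F i = F j → j = i - 1 ∨ j = i ∨ j = i + 1) :
    n ≤ {i | F i = F (i + 1)}.ncard + Nat.card β := by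
  have hcompl : {i | F i = F (i + 1)}ᶜ.ncard ≤ Nat.card β := by
    rw [Set.compl_ofPred, ← (injOn_setOf_ne_apply_add_one hF).ncard_image]
    exact Set.ncard_le_card _
  have hsum := Set.ncard_add_ncard_compl {i | F i = F (i + 1)}
  rw [Nat.card_eq_fintype_card, Fintype.card_fin] at hsum
  omega

end CyclicFibres

section BarycentricCoordinates

variable {ι k V P : Type*} [AddCommGroup V] [AddTorsor V P]

theorem AffineBasis.sub_apply_eq_sum_coord_mul [Fintype ι] [CommRing k] [Module k V]
    (b : AffineBasis ι k P) (f : P →ᵃ[k] k) (c : k) (x : P) :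
    c - f x = ∑ i, b.coord i x * (c - f (b i)) := by
  have hsum := b.sum_coord_apply_eq_one x
  have hfx := Finset.univ.map_affineCombination b (fun i => b.coord i x) hsum f
  rw [b.affineCombination_coord_eq_self,
    Finset.univ.affineCombination_eq_linear_combination _ _ hsum] at hfx
  simp only [mul_sub, Finset.sum_sub_distrib, ← Finset.sum_mul, hsum, one_mul, hfx,
    Function.comp_apply, smul_eq_mul]

theorem AffineBasis.coord_mul_sub_eq_sub [Fintype ι] [CommRing k] [Module k V]
    (b : AffineBasis ι k P) {f : P →ᵃ[k] k} {c : k} {j : ι} (hf : ∀ i ≠ j, f (b i) = c)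
    (x : P) : b.coord j x * (c - f (b j)) = c - f x := by
  rw [b.sub_apply_eq_sum_coord_mul f c x, Finset.sum_eq_single j
    (fun i _ hi => by rw [hf i hi, sub_self, mul_zero]) (by simp)]

theorem AffineBasis.coord_pos_of_apply_lt [Fintype ι] [CommRing k] [LinearOrder k]
    [IsStrictOrderedRing k] [Module k V] (b : AffineBasis ι k P) {f : P →ᵃ[k] k} {c : k}
    {j : ι} (hf : ∀ i ≠ j, f (b i) = c) (hj : f (b j) < c) {x : P} (hx : f x < c) :
    0 < b.coord j x :=
  pos_of_mul_pos_left (by rw [b.coord_mul_sub_eq_sub hf]; exact sub_pos.2 hx) (sub_pos.2 hj).le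

noncomputable def AffineBasis.ofNotCollinear [DivisionRing k] [Module k V]
    (hV : Module.finrank k V = 2) {p q r : P} (h : ¬Collinear k {p, q, r}) :
    AffineBasis (Fin 3) k P :=
  haveI := FiniteDimensional.of_finrank_eq_succ hV
  ⟨![p, q, r], affineIndependent_iff_not_collinear_set.2 h, by
    rw [(affineIndependent_iff_not_collinear_set.2 h).affineSpan_eq_top_iff_card_eq_finrank_add_one,
      hV, Fintype.card_fin]⟩

theorem AffineBasis.range_ofNotCollinear [DivisionRing k] [Module k V]
    (hV : Module.finrank k V = 2) {p q r : P} (h : ¬Collinear k {p, q, r}) :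
    Set.range (AffineBasis.ofNotCollinear hV h) = {p, q, r} := by
  change Set.range ![p, q, r] = _
  simp only [Matrix.range_cons, Matrix.range_empty, Set.union_empty, Set.singleton_union]

end BarycentricCoordinates

namespace TDiagram

variable {d : ℕ} (X : TDiagram d)

theorem not_collinear_black {a b c : Fin (d + 3)} (hab : a ≠ b) (hac : a ≠ c) (hbc : b ≠ c) :
    ¬Collinear ℝ {X.black a, X.black b, X.black c} := by
  simpa using X.genPos (.inl a) (.inl b) (.inl c) (by simpa) (by simpa) (by simpa)

/-- The affine basis `A_{i-1}, A_i, A_{i+1}`, so that coordinate `1` belongs to `A_i`. -/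
noncomputable def cornerBasis (i : Fin (d + 3)) : AffineBasis (Fin 3) ℝ (ℝ × ℝ) :=
  .ofNotCollinear (by simp) (X.not_collinear_black (Fin.sub_one_ne_self i (by omega))
    (Fin.sub_one_ne_add_one i (by omega)) (Fin.self_ne_add_one i (by omega)))

theorem bTri_eq_setOf_coord_pos (i : Fin (d + 3)) :
    X.bTri i = {x | ∀ k, 0 < (X.cornerBasis i).coord k x} := by
  rw [← (X.cornerBasis i).interior_convexHull, cornerBasis, AffineBasis.range_ofNotCollinear]
  rfl

/-- Every other black vertex lies strictly beyond the diagonal `A_{i-1} A_{i+1}`: the support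
lines of the two sides at `A_i` make its outer coordinates positive, and then the support line of
the side `A_m A_{m+1}` makes its middle coordinate negative. -/
theorem cornerBasis_coord_one_black_neg {i m : Fin (d + 3)} (hm₁ : m ≠ i - 1) (hm₂ : m ≠ i)
    (hm₃ : m ≠ i + 1) : (X.cornerBasis i).coord 1 (X.black m) < 0 := by
  set b := X.cornerBasis i
  have hb₀ : b 0 = X.black (i - 1) := rfl
  have hγ : 0 < b.coord 2 (X.black m) := by
    obtain ⟨g, c, hg₀, hg₁, hg⟩ := X.edgeOrder (i - 1)
    rw [sub_add_cancel] at hg₁ hg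
    refine b.coord_pos_of_apply_lt (f := g.toAffineMap) (fun k hk => ?_)
      (hg _ (Fin.sub_one_ne_add_one i (by omega)).symm (Fin.self_ne_add_one i (by omega)).symm)
      (hg _ hm₁ hm₂)
    fin_cases k
    exacts [hg₀, hg₁, absurd rfl hk]
  have hα : 0 < b.coord 0 (X.black m) := by
    obtain ⟨g, c, hg₁, hg₂, hg⟩ := X.edgeOrder i
    refine b.coord_pos_of_apply_lt (f := g.toAffineMap) (fun k hk => ?_)
      (hg _ (Fin.sub_one_ne_self i (by omega)) (Fin.sub_one_ne_add_one i (by omega)))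
      (hg _ hm₂ hm₃)
    fin_cases k
    exacts [absurd rfl hk, hg₁, hg₂]
  obtain ⟨f, c, hf₀, hf₁, hf⟩ := X.edgeOrder m
  have h₀ : f (b 0) ≤ c := by
    by_cases h : i - 1 = m + 1
    · rw [hb₀, h, hf₁]
    · exact (hf _ (Ne.symm hm₁) h).le
  have h₁ : f (b 1) < c := hf _ (Ne.symm hm₂) fun h => hm₁ (eq_sub_of_add_eq h.symm)
  have h₂ : f (b 2) < c := hf _ (Ne.symm hm₃) fun h => hm₂ (add_right_cancel h).symm
  have hsum := b.sub_apply_eq_sum_coord_mul f.toAffineMap c (X.black m)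
  simp only [Fin.sum_univ_three, LinearMap.coe_toAffineMap, hf₀, sub_self] at hsum
  have hrest : 0 < b.coord 0 (X.black m) * (c - f (b 0)) + b.coord 2 (X.black m) * (c - f (b 2)) :=
    add_pos_of_nonneg_of_pos (mul_nonneg hα.le (sub_nonneg.2 h₀)) (mul_pos hγ (sub_pos.2 h₂))
  exact neg_of_mul_neg_left (by linarith) (sub_pos.2 h₁).le

theorem cornerBasis_coord_one_black_nonpos {i m : Fin (d + 3)} (hm : m ≠ i) :
    (X.cornerBasis i).coord 1 (X.black m) ≤ 0 := by
  by_cases h₁ : m = i - 1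
  · subst h₁
    exact ((X.cornerBasis i).coord_apply_ne (show (1 : Fin 3) ≠ 0 by decide)).le
  by_cases h₃ : m = i + 1
  · subst h₃
    exact ((X.cornerBasis i).coord_apply_ne (show (1 : Fin 3) ≠ 2 by decide)).le
  exact (X.cornerBasis_coord_one_black_neg h₁ hm h₃).le

theorem disjoint_bTri {i j : Fin (d + 3)} (h₁ : j ≠ i - 1) (h₂ : j ≠ i)
    (h₃ : j ≠ i + 1) :
    Disjoint (X.bTri i) (X.bTri j) := by
  have hj : X.bTri j ⊆ {x | (X.cornerBasis i).coord 1 x ≤ 0} := by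
    refine interior_subset.trans (convexHull_min ?_ ((convex_Iic (0 : ℝ)).affine_preimage _))
    rintro _ (rfl | rfl | rfl)
    · exact X.cornerBasis_coord_one_black_nonpos fun h => h₃ (eq_add_of_sub_eq h)
    · exact X.cornerBasis_coord_one_black_nonpos h₂
    · exact X.cornerBasis_coord_one_black_nonpos fun h => h₁ (eq_sub_of_add_eq h)
  rw [X.bTri_eq_setOf_coord_pos i]
  exact Set.disjoint_left.2 fun x hx hx' => (hx 1).not_ge (hj hx')

theorem existsUnique_white_mem_bTri (i : Fin (d + 3)) : ∃! w, X.white w ∈ X.bTri i :=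
  X.onePerTriangle _ _ _ (Fin.sub_one_ne_self i (by omega)) (Fin.sub_one_ne_add_one i (by omega))
    (Fin.self_ne_add_one i (by omega))

noncomputable def bWhite (i : Fin (d + 3)) : Fin (d + 1) :=
  (X.existsUnique_white_mem_bTri i).exists.choose

theorem white_bWhite_mem_bTri (i : Fin (d + 3)) : X.white (X.bWhite i) ∈ X.bTri i :=
  (X.existsUnique_white_mem_bTri i).exists.choose_spec

theorem eq_sub_one_or_eq_or_eq_add_one_of_bWhite_eq (i j : Fin (d + 3))
    (h : X.bWhite i = X.bWhite j) :
    j = i - 1 ∨ j = i ∨ j = i + 1 := by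
  by_contra! hne
  exact Set.disjoint_left.1 (X.disjoint_bTri hne.1 hne.2.1 hne.2.2) (X.white_bWhite_mem_bTri i)
    (h ▸ X.white_bWhite_mem_bTri j)

def sideAdjacent : Set (Fin (d + 1)) :=
  {w | ∃ i, X.white w ∈ X.bTri i ∧ X.white w ∈ X.bTri (i + 1)}

theorem mapsTo_bWhite_sideAdjacent :
    Set.MapsTo X.bWhite {i | X.bWhite i = X.bWhite (i + 1)} X.sideAdjacent :=
  fun i hi => ⟨i, X.white_bWhite_mem_bTri i, hi ▸ X.white_bWhite_mem_bTri (i + 1)⟩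

theorem two_le_ncard_sideAdjacent (hd : 1 ≤ d) : 2 ≤ X.sideAdjacent.ncard := by
  have hF := X.eq_sub_one_or_eq_or_eq_add_one_of_bWhite_eq
  calc 2 ≤ {i | X.bWhite i = X.bWhite (i + 1)}.ncard := by
        have := le_ncard_setOf_eq_apply_add_one hF
        rw [Nat.card_eq_fintype_card, Fintype.card_fin] at this
        omega
    _ ≤ X.sideAdjacent.ncard :=
        Set.ncard_le_ncard_of_injOn _ X.mapsTo_bWhite_sideAdjacent
          (injOn_setOf_eq_apply_add_one (by omega) hF)

theorem ncard_sideAdjacent_of_eq_zero (X : TDiagram 0) : X.sideAdjacent.ncard = 1 :=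
  Set.ncard_eq_one.2 ⟨X.bWhite 0, Set.eq_singleton_iff_unique_mem.2
    ⟨X.mapsTo_bWhite_sideAdjacent (Subsingleton.elim (α := Fin 1) _ _),
    fun _ _ => Subsingleton.elim (α := Fin 1) _ _⟩⟩

end TDiagram

/-- Lemma 3.7(1): in a t-diagram with `d ≥ 1` there are at least two white points
adjacent to sides (lying in the boundary triangles of two adjacent black vertices),
and for `d = 0` there is exactly one such white point. -/
theorem stmt5 (d : ℕ) (X : TDiagram d) :
    (1 ≤ d → 2 ≤ Nat.card {w : Fin (d + 1) //
        ∃ i : Fin (d + 3), X.white w ∈ X.bTri i ∧ X.white w ∈ X.bTri (i + 1)}) ∧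
    (d = 0 → Nat.card {w : Fin (d + 1) //
        ∃ i : Fin (d + 3), X.white w ∈ X.bTri i ∧ X.white w ∈ X.bTri (i + 1)} = 1) := by
  refine ⟨X.two_le_ncard_sideAdjacent, ?_⟩
  rintro rfl
  exact X.ncard_sideAdjacent_of_eq_zero
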